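/- For every integer n ≥ 3 and every real λ, (−B(n,λ) + E(n))·D(λ) equals the 2×2 matrix −(1/2)·diag((λ−2)(λ−n), (λ+1)(λ−(n+1))); consequently this matrix is invertible if and only if λ ∉ {−1, 2, n, n+1}. -/
import Mathlib


open Matrix

/-- The indicial family `I(δG, λ)` of the divergence composed with trace reversal,
in the scalar block decomposition. -/
noncomputable def B (n : ℕ) (lam : ℝ) : Matrix (Fin 2) (Fin 4) ℝ :=
  (1 / 2 : ℝ) • !![lam - 2 * (n : ℝ), 0, (n : ℝ) * (lam - 2), 0;
                   0, 2 * (lam - ((n : ℝ) + 1)), 0, 0]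

/-- The indicial operator of the constraint-damping modification `E_{g₀}`,
in the scalar block decomposition. -/
noncomputable def E (n : ℕ) : Matrix (Fin 2) (Fin 4) ℝ :=
  !![1, 0, -2 * (n : ℝ), 0;
     0, 0, 0, 0]

/-- The indicial family `I(δ*, λ)` of the symmetric gradient acting on one-forms,
in the scalar block decomposition. -/
noncomputable def D (lam : ℝ) : Matrix (Fin 4) (Fin 2) ℝ :=
  !![lam, 0;
     0, (lam + 1) / 2;
     1, 0;
     0, 0]

/-- `(−I(δG,λ) + I(E,λ)) ∘ I(δ*,λ) = −½ diag((λ−2)(λ−n), (λ+1)(λ−(n+1)))`, which is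
invertible iff `λ ∉ {−1, 2, n, n+1}`. -/
theorem gauge_propagation_indicial_family (n : ℕ) (hn : 3 ≤ n) (lam : ℝ) :
    (-(B n lam) + E n) * D lam
      = (-(1 / 2 : ℝ)) • !![(lam - 2) * (lam - (n : ℝ)), 0;
                            0, (lam + 1) * (lam - ((n : ℝ) + 1))] ∧
    (IsUnit ((-(B n lam) + E n) * D lam) ↔
      lam ∉ ({-1, 2, (n : ℝ), (n : ℝ) + 1} : Set ℝ)) := by
  have heq : (-(B n lam) + E n) * D lam
      = (-(1 / 2 : ℝ)) • !![(lam - 2) * (lam - (n : ℝ)), 0;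
                            0, (lam + 1) * (lam - ((n : ℝ) + 1))] := by
    ext i j
    fin_cases i <;> fin_cases j <;>
      simp [B, E, D, Matrix.mul_apply, Fin.sum_univ_four] <;> ring
  refine ⟨heq, ?_⟩
  rw [heq, Matrix.isUnit_iff_isUnit_det]
  rw [Matrix.det_smul, Matrix.det_fin_two_of]
  simp only [isUnit_iff_ne_zero, Set.mem_insert_iff, Set.mem_singleton_iff]
  constructor
  · intro h hmem
    apply h
    rcases hmem with h1 | h1 | h1 | h1 <;> subst h1 <;> ring
  · intro h
    push_neg at h
    obtain ⟨h1, h2, h3, h4⟩ := h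
    have h1' : lam + 1 ≠ 0 := fun hc => h1 (by linarith)
    have h2' : lam - 2 ≠ 0 := sub_ne_zero.mpr h2
    have h3' : lam - (n : ℝ) ≠ 0 := sub_ne_zero.mpr h3
    have h4' : lam - ((n : ℝ) + 1) ≠ 0 := sub_ne_zero.mpr h4
    have hne : ((lam - 2) * (lam - (n : ℝ))) * ((lam + 1) * (lam - ((n : ℝ) + 1))) ≠ 0 :=
      mul_ne_zero (mul_ne_zero h2' h3') (mul_ne_zero h1' h4')
    intro hz
    apply hne
    simp only [Fintype.card_fin, mul_zero, zero_mul, sub_zero] at hz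
    linear_combination 4 * hz
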